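/- For every integer k ≥ 1, setting m = k² + 3k + 1 and M = (m−1)/2, one has the identity t^{e(k,k)}·D_{k,k}(t) = (t² − 1)·Ψ_m(t) in ℤ[t, t⁻¹]; in particular D_{k,k}(t) = (t^{k²+3k+1} + 1)(t − 1). -/

import Mathlib

open LaurentPolynomial

/-- The Laurent polynomial `D_{n,k}(t) = -t^{(k+2)n+1} + t^{(k+1)(n+1)}(t^{k+1}+1)
- t^{k(n+3)+1} + t - 1` in `ℤ[t,t⁻¹]`. -/
noncomputable def D (n k : ℤ) : LaurentPolynomial ℤ :=
  -T ((k + 2) * n + 1) + T ((k + 1) * (n + 1)) * (T (k + 1) + 1) -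
    T (k * (n + 3) + 1) + T 1 - 1

/-- The exponent `e(n,k) = n(n-1)/2 + k(k-1) - 2nk`. -/
def e (n k : ℤ) : ℤ := n * (n - 1) / 2 + k * (k - 1) - 2 * n * k

/-- For odd `m ≥ 1` with `M = (m-1)/2`, the symmetric Laurent polynomial
`Ψ_m(t) = ∑_{j=-M}^{M} (-1)^{M+j} t^j`. -/
noncomputable def Psi (m : ℤ) : LaurentPolynomial ℤ :=
  ∑ j ∈ Finset.Icc (-((m - 1) / 2)) ((m - 1) / 2),
    ((((m - 1) / 2 + j).negOnePow : ℤ) : LaurentPolynomial ℤ) * T j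

/-!
Two of the five monomials of `D_{k,k}` cancel and the rest factors as `(t^m + 1)(t - 1)`.
Since `e(k,k) = -M`, multiplying by `t^{e(k,k)}` turns `t^m + 1` into `t^{M+1} + t^{-M}`,
which is `(t + 1) Ψ_m(t)` by induction on `M` via
`Ψ_{2M+3} = t^{-(M+1)} + t^{M+1} - Ψ_{2M+1}`.
-/

lemma Psi_two_mul_add_one (M : ℤ) :
    Psi (2 * M + 1) =
      ∑ j ∈ Finset.Icc (-M) M, (((M + j).negOnePow : ℤ) : LaurentPolynomial ℤ) * T j := by
  simp [Psi]

lemma Psi_two_mul_add_three (M : ℤ) (hM : 0 ≤ M) :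
    Psi (2 * (M + 1) + 1) = T (-(M + 1)) + T (M + 1) - Psi (2 * M + 1) := by
  have hIcc : Finset.Icc (-(M + 1)) (M + 1) =
      insert (-(M + 1)) (insert (M + 1) (Finset.Icc (-M) M)) := by
    ext x; simp only [Finset.mem_Icc, Finset.mem_insert]; omega
  have h_lo : -(M + 1) ∉ insert (M + 1) (Finset.Icc (-M) M) := by
    simp only [Finset.mem_Icc, Finset.mem_insert]; omega
  have h_hi : M + 1 ∉ Finset.Icc (-M) M := by simp
  rw [Psi_two_mul_add_one, Psi_two_mul_add_one, hIcc, Finset.sum_insert h_lo,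
    Finset.sum_insert h_hi, sub_eq_add_neg, ← Finset.sum_neg_distrib]
  have h_inner : ∀ j, (((M + 1 + j).negOnePow : ℤ) : LaurentPolynomial ℤ) * T j =
      -((((M + j).negOnePow : ℤ) : LaurentPolynomial ℤ) * T j) := by
    intro j
    rw [show M + 1 + j = M + j + 1 by ring, Int.negOnePow_succ]
    push_cast; ring
  rw [Finset.sum_congr rfl fun j _ => h_inner j,
    show M + 1 + -(M + 1) = 0 by ring, show M + 1 + (M + 1) = 2 * (M + 1) by ring,
    Int.negOnePow_zero, Int.negOnePow_two_mul]
  push_cast; ring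

lemma T_one_add_one_mul_Psi (M : ℕ) :
    (T 1 + 1) * Psi (2 * M + 1) = T (M + 1) + T (-M) := by
  induction M with
  | zero => simp [Psi]
  | succ M ih =>
    push_cast
    rw [Psi_two_mul_add_three M M.cast_nonneg, mul_sub, ih]
    simp only [add_mul, mul_add, one_mul, ← T_add]
    ring_nf

lemma D_self (k : ℤ) : D k k = (T (k ^ 2 + 3 * k + 1) + 1) * (T 1 - 1) := by
  simp only [D, mul_add, add_mul, mul_sub, mul_one, one_mul, ← T_add]
  ring_nf

lemma two_mul_e_self (k : ℤ) : 2 * e k k = -(k ^ 2 + 3 * k) := by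
  obtain ⟨N, hN⟩ := Int.even_mul_pred_self k
  rw [e, hN, ← two_mul, Int.mul_ediv_cancel_left N two_ne_zero]
  linear_combination (-3 : ℤ) * hN

/-- For `k ≥ 1`, with `m = k² + 3k + 1`, one has
`t^{e(k,k)} · D_{k,k}(t) = (t² - 1) · Ψ_m(t)`; in particular
`D_{k,k}(t) = (t^{k²+3k+1} + 1)(t - 1)`. -/
theorem D_k_k_eq (k : ℤ) (hk : 1 ≤ k) :
    T (e k k) * D k k = (T 2 - 1) * Psi (k ^ 2 + 3 * k + 1) ∧
    D k k = (T (k ^ 2 + 3 * k + 1) + 1) * (T 1 - 1) := by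
  obtain ⟨M, hM⟩ : ∃ M : ℕ, k ^ 2 + 3 * k = 2 * M := by
    obtain ⟨N, hN⟩ := Int.even_mul_succ_self k
    refine ⟨(N + k).toNat, ?_⟩
    rw [Int.toNat_of_nonneg (by nlinarith)]
    linear_combination hN
  have he : e k k = -M := by linarith [two_mul_e_self k]
  refine ⟨?_, D_self k⟩
  have hT2 : (T 2 : LaurentPolynomial ℤ) - 1 = (T 1 - 1) * (T 1 + 1) := by
    rw [show (2 : ℤ) = 1 + 1 from rfl, T_add]; ring
  calc T (e k k) * D k k
      = (T (M + 1) + T (-M)) * (T 1 - 1) := by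
        rw [he, D_self, hM, ← mul_assoc, mul_add, ← T_add]
        ring_nf
    _ = (T 2 - 1) * Psi (k ^ 2 + 3 * k + 1) := by
        rw [hM, ← T_one_add_one_mul_Psi, hT2]; ring
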